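/- arXiv:math/0502087 — 6 statements merged into one kernel-verified Lean document; each statement's English description precedes it below -/
import Mathlib

section
/- Let f₁, f₂, f₃, f₄ : V_n → F_2. The vector (1/2)(f̂₁ + f̂₂ + f̂₃ + f̂₄) (pointwise half-sum of Walsh–Hadamard spectra) is the Walsh–Hadamard spectrum of some Boolean function g if and only if f₁(x) + f₂(x) + f₃(x) + f₄(x) = 1 for all x ∈ V_n; moreover, in that case g(x) = f₁(x)f₂(x) + f₁(x)f₃(x) + f₂(x)f₃(x). -/
open Finset

def ip {n : ℕ} (a b : Fin n → ZMod 2) : ZMod 2 := ∑ i, a i * b i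

def wht {n : ℕ} (f : (Fin n → ZMod 2) → ZMod 2) (l : Fin n → ZMod 2) : ℤ :=
  ∑ x : Fin n → ZMod 2, (-1 : ℤ) ^ (f x + ip l x).val

lemma npa (a b : ZMod 2) : (-1:ℤ)^(a+b).val = (-1)^a.val * (-1)^b.val := by revert a b; decide

lemma ip_add_right {n : ℕ} (l x y : Fin n → ZMod 2) : ip l (x+y) = ip l x + ip l y := by
  simp [ip, mul_add, Finset.sum_add_distrib]

lemma ip_update {n : ℕ} (l z : Fin n → ZMod 2) (i : Fin n) (hzi : z i = 1) :
    ip (Function.update l i (l i + 1)) z = ip l z + 1 := by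
  unfold ip
  rw [← Finset.add_sum_erase _ _ (Finset.mem_univ i),
      ← Finset.add_sum_erase _ (fun j => l j * z j) (Finset.mem_univ i)]
  have : ∑ j ∈ Finset.univ.erase i, Function.update l i (l i + 1) j * z j
      = ∑ j ∈ Finset.univ.erase i, l j * z j := by
    refine Finset.sum_congr rfl fun j hj => ?_
    rw [Function.update_of_ne (Finset.ne_of_mem_erase hj)]
  rw [this, Function.update_self, hzi]
  ring

lemma sum_char {n : ℕ} (z : Fin n → ZMod 2) (hz : z ≠ 0) :
    ∑ l : Fin n → ZMod 2, (-1:ℤ)^(ip l z).val = 0 := by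
  obtain ⟨i, hi⟩ : ∃ i, z i ≠ 0 := by
    by_contra h; push_neg at h; exact hz (funext fun i => h i)
  have hzi : z i = 1 := by
    have : ∀ a : ZMod 2, a ≠ 0 → a = 1 := by decide
    exact this _ hi
  refine Finset.sum_involution (fun l _ => Function.update l i (l i + 1)) ?_ ?_ ?_ ?_
  · intro l _
    rw [ip_update l z i hzi, npa]
    have : ((-1:ℤ))^(1 : ZMod 2).val = -1 := by decide
    rw [this]; ring
  · intro l _ _ hne
    have := congrFun hne i
    simp only [Function.update_self] at this
    exact absurd this ((by decide : ∀ a : ZMod 2, ¬(a + 1 = a)) _)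
  · intro l _; exact Finset.mem_univ _
  · intro l _
    funext j
    by_cases hj : j = i
    · subst hj
      have h2 : ∀ a : ZMod 2, a + 1 + 1 = a := by decide
      simp only [Function.update_self]
      exact h2 _
    · simp only [Function.update_of_ne hj]

lemma card_pow {n : ℕ} : (Finset.univ : Finset (Fin n → ZMod 2)).card = 2^n := by
  simp [Finset.card_univ]

lemma inv_wht {n : ℕ} (f : (Fin n → ZMod 2) → ZMod 2) (x : Fin n → ZMod 2) :
    ∑ l : Fin n → ZMod 2, (-1:ℤ)^(ip l x).val * wht f l = 2^n * (-1:ℤ)^(f x).val := by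
  have key : ∀ y : Fin n → ZMod 2,
      (∑ l : Fin n → ZMod 2, (-1:ℤ)^(ip l (x+y)).val) = if y = x then 2^n else 0 := by
    intro y
    by_cases h : y = x
    · rw [if_pos h, h]
      have hx : x + x = 0 := by
        funext i; exact CharTwo.add_self_eq_zero _
      rw [hx]
      simp [ip, card_pow]
    · rw [if_neg h]
      apply sum_char
      intro h0
      apply h
      funext i
      exact (by decide : ∀ a b : ZMod 2, a + b = 0 → b = a) _ _ (congrFun h0 i)
  unfold wht
  calc ∑ l : Fin n → ZMod 2, (-1:ℤ)^(ip l x).val * ∑ y : Fin n → ZMod 2, (-1:ℤ)^(f y + ip l y).val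
      = ∑ l : Fin n → ZMod 2, ∑ y : Fin n → ZMod 2, (-1:ℤ)^(f y).val * (-1:ℤ)^(ip l (x + y)).val := by
        refine Finset.sum_congr rfl fun l _ => ?_
        rw [Finset.mul_sum]
        refine Finset.sum_congr rfl fun y _ => ?_
        rw [npa, ip_add_right, npa]; ring
    _ = ∑ y : Fin n → ZMod 2, (-1:ℤ)^(f y).val * ∑ l : Fin n → ZMod 2, (-1:ℤ)^(ip l (x + y)).val := by
        rw [Finset.sum_comm]
        exact Finset.sum_congr rfl fun y _ => (Finset.mul_sum _ _ _).symm
    _ = 2^n * (-1:ℤ)^(f x).val := by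
        have hpt : ∀ y : Fin n → ZMod 2, (-1:ℤ)^(f y).val * ∑ l : Fin n → ZMod 2, (-1:ℤ)^(ip l (x+y)).val
            = if y = x then (-1:ℤ)^(f x).val * 2^n else 0 := by
          intro y
          rw [key y]
          by_cases h : y = x
          · rw [if_pos h, if_pos h, h]
          · simp [h]
        rw [Finset.sum_congr rfl fun y _ => hpt y, Finset.sum_ite_eq' Finset.univ x,
            if_pos (Finset.mem_univ x)]
        ring

theorem half_sum_spectrum (n : ℕ) (f₁ f₂ f₃ f₄ : (Fin n → ZMod 2) → ZMod 2) :
    ((∃ g : (Fin n → ZMod 2) → ZMod 2,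
        ∀ l, 2 * wht g l = wht f₁ l + wht f₂ l + wht f₃ l + wht f₄ l) ↔
      (∀ x, f₁ x + f₂ x + f₃ x + f₄ x = 1)) ∧
    ((∀ x, f₁ x + f₂ x + f₃ x + f₄ x = 1) →
      ∀ l, 2 * wht (fun x => f₁ x * f₂ x + f₁ x * f₃ x + f₂ x * f₃ x) l
          = wht f₁ l + wht f₂ l + wht f₃ l + wht f₄ l) := by
  have main : (∀ x, f₁ x + f₂ x + f₃ x + f₄ x = 1) →
      ∀ l, 2 * wht (fun x => f₁ x * f₂ x + f₁ x * f₃ x + f₂ x * f₃ x) l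
          = wht f₁ l + wht f₂ l + wht f₃ l + wht f₄ l := by
    intro h l
    unfold wht
    rw [Finset.mul_sum, ← Finset.sum_add_distrib, ← Finset.sum_add_distrib,
        ← Finset.sum_add_distrib]
    refine Finset.sum_congr rfl fun x _ => ?_
    exact (by decide : ∀ a b c d t : ZMod 2, a + b + c + d = 1 →
        2*(-1:ℤ)^((a*b+a*c+b*c)+t).val
          = (-1:ℤ)^(a+t).val + (-1:ℤ)^(b+t).val + (-1:ℤ)^(c+t).val + (-1:ℤ)^(d+t).val)
      _ _ _ _ _ (h x)
  refine ⟨⟨?_, fun h => ⟨_, main h⟩⟩, main⟩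
  rintro ⟨g, hg⟩ x
  have e1 : ∑ l : Fin n → ZMod 2, (-1:ℤ)^(ip l x).val * (2 * wht g l)
      = ∑ l : Fin n → ZMod 2, (-1:ℤ)^(ip l x).val * (wht f₁ l + wht f₂ l + wht f₃ l + wht f₄ l) :=
    Finset.sum_congr rfl fun l _ => by rw [hg l]
  have lhs : ∑ l : Fin n → ZMod 2, (-1:ℤ)^(ip l x).val * (2 * wht g l)
      = 2^n * (2 * (-1:ℤ)^(g x).val) := by
    rw [Finset.sum_congr rfl fun l (_ : l ∈ Finset.univ) =>
        (by ring : (-1:ℤ)^(ip l x).val * (2 * wht g l) = 2 * ((-1:ℤ)^(ip l x).val * wht g l)),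
      ← Finset.mul_sum, inv_wht]
    ring
  have rhs : ∑ l : Fin n → ZMod 2, (-1:ℤ)^(ip l x).val * (wht f₁ l + wht f₂ l + wht f₃ l + wht f₄ l)
      = 2^n * ((-1:ℤ)^(f₁ x).val + (-1:ℤ)^(f₂ x).val + (-1:ℤ)^(f₃ x).val + (-1:ℤ)^(f₄ x).val) := by
    rw [Finset.sum_congr rfl fun l (_ : l ∈ Finset.univ) =>
        (by ring : (-1:ℤ)^(ip l x).val * (wht f₁ l + wht f₂ l + wht f₃ l + wht f₄ l)
          = (-1:ℤ)^(ip l x).val * wht f₁ l + (-1:ℤ)^(ip l x).val * wht f₂ l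
            + (-1:ℤ)^(ip l x).val * wht f₃ l + (-1:ℤ)^(ip l x).val * wht f₄ l),
      Finset.sum_add_distrib, Finset.sum_add_distrib, Finset.sum_add_distrib,
      inv_wht, inv_wht, inv_wht, inv_wht]
    ring
  have e2 : (2:ℤ)^n * (2 * (-1:ℤ)^(g x).val)
      = (2:ℤ)^n * ((-1:ℤ)^(f₁ x).val + (-1:ℤ)^(f₂ x).val + (-1:ℤ)^(f₃ x).val + (-1:ℤ)^(f₄ x).val) :=
    lhs.symm.trans (e1.trans rhs)
  have e3 := mul_left_cancel₀ (by positivity : ((2:ℤ)^n) ≠ 0) e2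
  exact (by decide : ∀ a b c d e : ZMod 2,
      2*(-1:ℤ)^e.val = (-1:ℤ)^a.val + (-1:ℤ)^b.val + (-1:ℤ)^c.val + (-1:ℤ)^d.val
        → a + b + c + d = 1) _ _ _ _ _ e3
end

section
/- For every n ≥ 1, the equation z₁² + z₂² + z₃² + z₄² = 2^{2n} has a unique solution in positive integers, namely z₁ = z₂ = z₃ = z₄ = 2^{n−1}. -/
lemma sq_decomp (m : ℕ) : ∃ q r s, r ≤ 1 ∧ m = 2*q + r ∧ m^2 = 4*s + r ∧ s = q*(q+r) := by
  rcases Nat.even_or_odd m with ⟨k, hk⟩ | ⟨k, hk⟩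
  · exact ⟨k, 0, k*(k+0), by omega, by omega, by subst hk; ring, rfl⟩
  · exact ⟨k, 1, k*(k+1), by omega, by omega, by subst hk; ring, rfl⟩

lemma key : ∀ n : ℕ, ∀ z : Fin 4 → ℕ, (∀ i, 0 < z i) →
    (∑ i, z i ^ 2 = 2 ^ (2 * (n+1))) → ∀ i, z i = 2 ^ n := by
  intro n
  induction n with
  | zero =>
    intro z hz hs
    rw [Fin.sum_univ_four] at hs
    obtain ⟨qa, ra, sa, hra, ha, ha2, hsa⟩ := sq_decomp (z 0)
    obtain ⟨qb, rb, sb, hrb, hb, hb2, hsb⟩ := sq_decomp (z 1)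
    obtain ⟨qc, rc, sc, hrc, hc, hc2, hsc⟩ := sq_decomp (z 2)
    obtain ⟨qd, rd, sd, hrd, hd, hd2, hsd⟩ := sq_decomp (z 3)
    rw [ha2, hb2, hc2, hd2] at hs
    norm_num at hs
    have hz0 := hz 0; have hz1 := hz 1; have hz2 := hz 2; have hz3 := hz 3
    rw [ha] at hz0; rw [hb] at hz1; rw [hc] at hz2; rw [hd] at hz3
    have hr : ra + rb + rc + rd = 0 ∨ ra + rb + rc + rd = 4 := by omega
    rcases hr with hr | hr
    · -- all even: q i ≥ 1, s i ≥ 1, sum too big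
      exfalso
      have h1 : 1 ≤ qa := by omega
      have h2 : 1 ≤ qb := by omega
      have h3 : 1 ≤ qc := by omega
      have h4 : 1 ≤ qd := by omega
      have e1 : 1 ≤ sa := by rw [hsa]; exact Nat.mul_pos (by omega) (by omega)
      have e2 : 1 ≤ sb := by rw [hsb]; exact Nat.mul_pos (by omega) (by omega)
      have e3 : 1 ≤ sc := by rw [hsc]; exact Nat.mul_pos (by omega) (by omega)
      have e4 : 1 ≤ sd := by rw [hsd]; exact Nat.mul_pos (by omega) (by omega)
      omega
    · -- all odd: s sum = 0, so q = 0, so z i = 1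
      have hra1 : ra = 1 := by omega
      have hrb1 : rb = 1 := by omega
      have hrc1 : rc = 1 := by omega
      have hrd1 : rd = 1 := by omega
      have hsa0 : sa = 0 := by omega
      have hsb0 : sb = 0 := by omega
      have hsc0 : sc = 0 := by omega
      have hsd0 : sd = 0 := by omega
      have hqa : qa = 0 := by rw [hsa0] at hsa; rcases Nat.mul_eq_zero.mp hsa.symm with h | h <;> omega
      have hqb : qb = 0 := by rw [hsb0] at hsb; rcases Nat.mul_eq_zero.mp hsb.symm with h | h <;> omega
      have hqc : qc = 0 := by rw [hsc0] at hsc; rcases Nat.mul_eq_zero.mp hsc.symm with h | h <;> omega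
      have hqd : qd = 0 := by rw [hsd0] at hsd; rcases Nat.mul_eq_zero.mp hsd.symm with h | h <;> omega
      have g0 : z 0 = 1 := by omega
      have g1 : z 1 = 1 := by omega
      have g2 : z 2 = 1 := by omega
      have g3 : z 3 = 1 := by omega
      intro i
      fin_cases i <;> simpa using ‹_›
  | succ n ih =>
    intro z hz hs
    rw [Fin.sum_univ_four] at hs
    obtain ⟨qa, ra, sa, hra, ha, ha2, hsa⟩ := sq_decomp (z 0)
    obtain ⟨qb, rb, sb, hrb, hb, hb2, hsb⟩ := sq_decomp (z 1)
    obtain ⟨qc, rc, sc, hrc, hc, hc2, hsc⟩ := sq_decomp (z 2)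
    obtain ⟨qd, rd, sd, hrd, hd, hd2, hsd⟩ := sq_decomp (z 3)
    rw [ha2, hb2, hc2, hd2] at hs
    have hM : (2:ℕ) ^ (2 * (n + 1 + 1)) = 4 * 2 ^ (2 * (n + 1)) := by
      rw [show 2 * (n + 1 + 1) = 2 * (n + 1) + 2 by ring, pow_add]; ring
    rw [hM] at hs
    have hMeven : 2 ^ (2 * (n + 1)) % 2 = 0 := by
      rw [show 2 * (n + 1) = (2 * n + 1) + 1 by ring, pow_succ]
      omega
    have hz0 := hz 0; have hz1 := hz 1; have hz2 := hz 2; have hz3 := hz 3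
    rw [ha] at hz0; rw [hb] at hz1; rw [hc] at hz2; rw [hd] at hz3
    have hr : ra + rb + rc + rd = 0 ∨ ra + rb + rc + rd = 4 := by omega
    rcases hr with hr | hr
    · -- all even: apply ih to q
      have hra0 : ra = 0 := by omega
      have hrb0 : rb = 0 := by omega
      have hrc0 : rc = 0 := by omega
      have hrd0 : rd = 0 := by omega
      subst hra0 hrb0 hrc0 hrd0
      simp only [Nat.add_zero] at hsa hsb hsc hsd
      have hq := ih ![qa, qb, qc, qd] (by
          intro i; fin_cases i <;> simp <;> omega)
        (by
          rw [Fin.sum_univ_four]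
          simp only [Matrix.cons_val_zero, Matrix.cons_val_one, Matrix.head_cons,
            Matrix.cons_val_two, Matrix.tail_cons, Matrix.cons_val_three]
          rw [pow_two, pow_two, pow_two, pow_two, ← hsa, ← hsb, ← hsc, ← hsd]
          omega)
      have e0 := hq 0; have e1 := hq 1; have e2 := hq 2; have e3 := hq 3
      simp only [Matrix.cons_val_zero, Matrix.cons_val_one, Matrix.head_cons,
        Matrix.cons_val_two, Matrix.tail_cons, Matrix.cons_val_three] at e0 e1 e2 e3
      have g0 : z 0 = 2 ^ (n + 1) := by rw [ha, e0, pow_succ]; ring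
      have g1 : z 1 = 2 ^ (n + 1) := by rw [hb, e1, pow_succ]; ring
      have g2 : z 2 = 2 ^ (n + 1) := by rw [hc, e2, pow_succ]; ring
      have g3 : z 3 = 2 ^ (n + 1) := by rw [hd, e3, pow_succ]; ring
      intro i
      fin_cases i <;> simpa using ‹_›
    · -- all odd: parity contradiction
      exfalso
      have hra1 : ra = 1 := by omega
      have hrb1 : rb = 1 := by omega
      have hrc1 : rc = 1 := by omega
      have hrd1 : rd = 1 := by omega
      subst hra1 hrb1 hrc1 hrd1
      have ea : sa % 2 = 0 := by
        rw [hsa]; exact Nat.even_iff.mp (Nat.even_mul_succ_self qa)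
      have eb : sb % 2 = 0 := by
        rw [hsb]; exact Nat.even_iff.mp (Nat.even_mul_succ_self qb)
      have ec : sc % 2 = 0 := by
        rw [hsc]; exact Nat.even_iff.mp (Nat.even_mul_succ_self qc)
      have ed : sd % 2 = 0 := by
        rw [hsd]; exact Nat.even_iff.mp (Nat.even_mul_succ_self qd)
      omega

theorem four_squares_unique (n : ℕ) (hn : 1 ≤ n) (z : Fin 4 → ℕ)
    (hz : ∀ i, 0 < z i) :
    (∑ i, (z i) ^ 2 = 2 ^ (2 * n)) ↔ (∀ i, z i = 2 ^ (n - 1)) := by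
  obtain ⟨m, rfl⟩ : ∃ m, n = m + 1 := ⟨n - 1, by omega⟩
  simp only [Nat.add_sub_cancel]
  constructor
  · intro hs
    exact key m z hz hs
  · intro h
    rw [Fin.sum_univ_four, h 0, h 1, h 2, h 3]
    rw [show 2 * (m + 1) = m + m + 2 by ring]
    ring
end

section
/- If q : V_n → F_2 (n ≥ 2) has Walsh–Hadamard transform supported on exactly four points λ₁, λ₂, λ₃, λ₄, then the signs γᵢ defined by q̂(λᵢ) = (−1)^{γᵢ}·2^{n−1} satisfy (−1)^{γ₁}(−1)^{γ₂}(−1)^{γ₃}(−1)^{γ₄} = −1. -/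
open Finset

/-!
Summing the Walsh–Hadamard transform over all `μ` inverts it at `0`:
`∑_μ q̂(μ) = 2^n (-1)^{q(0)}`. With four nonzero values `±2^{n-1}`, the four signs sum to `±2`,
so exactly one of them differs from the other three and their product is `-1`.
-/

lemma neg_one_pow_val_add (a b : ZMod 2) :
    (-1 : ℤ) ^ (a + b).val = (-1) ^ a.val * (-1) ^ b.val := by
  fin_cases a <;> fin_cases b <;> decide

section InnerProduct

variable {n : ℕ}

lemma ip_add_left (a b x : Fin n → ZMod 2) : ip (a + b) x = ip a x + ip b x := by
  simp only [ip, Pi.add_apply, add_mul, sum_add_distrib]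

lemma ip_zero_right (a : Fin n → ZMod 2) : ip a 0 = 0 := by
  simp [ip]

lemma ip_single_one_left (j : Fin n) (x : Fin n → ZMod 2) : ip (Pi.single j 1) x = x j := by
  simp [ip, Pi.single_apply]

lemma sum_neg_one_pow_ip_eq_zero {x : Fin n → ZMod 2} (hx : x ≠ 0) :
    ∑ μ, (-1 : ℤ) ^ (ip μ x).val = 0 := by
  obtain ⟨j, hj⟩ := Function.ne_iff.mp hx
  have hxj : x j = 1 := (by decide : ∀ a : ZMod 2, a ≠ 0 → a = 1) _ hj
  -- translating `μ` by the `j`-th basis vector flips every sign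
  have hflip : ∀ μ, -(-1 : ℤ) ^ (ip μ x).val = (-1) ^ (ip (μ + Pi.single j 1) x).val := by
    intro μ
    rw [ip_add_left, ip_single_one_left, hxj, neg_one_pow_val_add, ZMod.val_one, pow_one,
      mul_neg_one]
  have hneg := Fintype.sum_equiv (Equiv.addRight (Pi.single j 1))
    (fun μ => -(-1 : ℤ) ^ (ip μ x).val) (fun μ => (-1 : ℤ) ^ (ip μ x).val) hflip
  rw [sum_neg_distrib] at hneg
  linarith

end InnerProduct

lemma sum_wht {n : ℕ} (f : (Fin n → ZMod 2) → ZMod 2) :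
    ∑ μ, wht f μ = (-1) ^ (f 0).val * 2 ^ n := by
  unfold wht
  rw [sum_comm]
  calc ∑ x, ∑ μ, (-1 : ℤ) ^ (f x + ip μ x).val
      = ∑ x, (-1) ^ (f x).val * ∑ μ, (-1 : ℤ) ^ (ip μ x).val := by
        simp only [neg_one_pow_val_add, mul_sum]
    _ = (-1) ^ (f 0).val * ∑ μ, (-1 : ℤ) ^ (ip μ 0).val :=
        sum_eq_single 0 (fun x _ hx => by rw [sum_neg_one_pow_ip_eq_zero hx, mul_zero])
          (by simp)
    _ = (-1) ^ (f 0).val * 2 ^ n := by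
        simp [ip_zero_right, Fintype.card_pi]

lemma prod_eq_neg_one_of_sum_eq_two_mul {ε : Fin 4 → ℤ} (hε : ∀ i, ε i = 1 ∨ ε i = -1)
    {s : ℤ} (hs : s = 1 ∨ s = -1) (hsum : ∑ i, ε i = 2 * s) : ∏ i, ε i = -1 := by
  rw [Fin.sum_univ_four] at hsum
  rw [Fin.prod_univ_four]
  rcases hε 0 with h0 | h0 <;> rcases hε 1 with h1 | h1 <;> rcases hε 2 with h2 | h2 <;>
    rcases hε 3 with h3 | h3 <;> rcases hs with hs | hs <;>
    norm_num [h0, h1, h2, h3, hs] at hsum <;> norm_num [h0, h1, h2, h3]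

theorem Q_sign_product (n : ℕ) (hn : 2 ≤ n) (q : (Fin n → ZMod 2) → ZMod 2)
    (lam : Fin 4 → (Fin n → ZMod 2)) (hlam : Function.Injective lam)
    (hsupp : ∀ μ, wht q μ ≠ 0 ↔ μ ∈ Set.range lam)
    (γ : Fin 4 → ZMod 2)
    (hγ : ∀ i, wht q (lam i) = (-1 : ℤ) ^ (γ i).val * 2 ^ (n - 1)) :
    ∏ i, (-1 : ℤ) ^ (γ i).val = -1 := by
  have hsum_support : ∑ i, wht q (lam i) = ∑ μ, wht q μ :=
    Fintype.sum_of_injective lam hlam _ _ (fun μ hμ => not_not.mp (mt (hsupp μ).mp hμ))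
      fun _ => rfl
  have hpow : (2 : ℤ) ^ n = 2 ^ (n - 1) * 2 := by
    rw [← pow_succ, Nat.sub_add_cancel (by omega)]
  have hsigns : ∑ i, (-1 : ℤ) ^ (γ i).val = 2 * (-1) ^ (q 0).val := by
    apply mul_right_cancel₀ (pow_ne_zero (n - 1) two_ne_zero : (2 : ℤ) ^ (n - 1) ≠ 0)
    rw [sum_mul, ← sum_congr rfl fun i _ => hγ i, hsum_support, sum_wht, hpow]
    ring
  exact prod_eq_neg_one_of_sum_eq_two_mul (fun i => neg_one_pow_eq_or ℤ _)
    (neg_one_pow_eq_or ℤ _) hsigns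
end

section
/- For a function f : V_{2n} → F_2 and integers m, k ≥ 1 with m + k = 2n, partition the sign-sequence of f into 2^m blocks of length 2^k indexed by prefixes α ∈ V_m, and form the 2^m × 2^k matrix A whose row indexed by α is the Walsh–Hadamard spectrum of the restriction f_α(y) = f(α, y). Then f is bent if and only if every row of A is a Walsh spectrum of some Boolean function of k variables and every column of A, multiplied by 2^{m−n}, is a Walsh spectrum of some Boolean function of m variables. In particular, the map f ↦ A is a bijection from the set of bent functions of 2n variables to the set of (m,k) bent rectangles. -/
open Finset

lemma np_add (a b : ZMod 2) : ((-1:ℤ))^((a+b).val) = (-1)^a.val * (-1)^b.val := by revert a b; decide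

lemma np_inj (a b : ZMod 2) (h : ((-1:ℤ))^a.val = (-1)^b.val) : a = b := by
  revert h; revert a b; decide

lemma z2_add_eq_zero (a b : ZMod 2) : a + b = 0 ↔ a = b := by revert a b; decide

lemma pi_add_eq_zero {N : ℕ} (x y : Fin N → ZMod 2) : x + y = 0 ↔ x = y := by
  constructor
  · intro h; funext i; exact (z2_add_eq_zero _ _).1 (congrFun h i)
  · rintro rfl; funext i; exact (z2_add_eq_zero _ _).2 rfl

lemma np_sum {ι : Type*} (s : Finset ι) (g : ι → ZMod 2) :
    ((-1:ℤ))^((∑ i ∈ s, g i).val) = ∏ i ∈ s, (-1:ℤ)^((g i).val) := by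
  induction s using Finset.cons_induction with
  | empty => simp
  | cons i s hi ih => rw [Finset.sum_cons, Finset.prod_cons, np_add, ih]

lemma ip_comm {N : ℕ} (a b : Fin N → ZMod 2) : ip a b = ip b a := by
  unfold ip; simp [mul_comm]

lemma ip_add_right_s8 {N : ℕ} (a b c : Fin N → ZMod 2) :
    ip a (b + c) = ip a b + ip a c := by
  unfold ip; simp [mul_add, Finset.sum_add_distrib]

lemma orth {N : ℕ} (c : Fin N → ZMod 2) :
    ∑ l : Fin N → ZMod 2, ((-1:ℤ))^((ip l c).val) = if c = 0 then 2^N else 0 := by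
  have h1 : ∀ l : Fin N → ZMod 2,
      ((-1:ℤ))^((ip l c).val) = ∏ i, (-1:ℤ)^((l i * c i).val) := fun l => np_sum _ _
  simp_rw [h1]
  rw [← Fintype.prod_sum (fun i (t : ZMod 2) => ((-1:ℤ))^((t * c i).val))]
  have h2 : ∀ d : ZMod 2, ∑ t : ZMod 2, ((-1:ℤ))^((t*d).val) = if d = 0 then 2 else 0 := by
    decide
  simp_rw [h2]
  by_cases hc : c = 0
  · subst hc; simp
  · rw [if_neg hc]
    obtain ⟨i, hi⟩ : ∃ i, c i ≠ 0 := by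
      by_contra h; push_neg at h; exact hc (funext h)
    exact Finset.prod_eq_zero (Finset.mem_univ i) (if_neg hi)

lemma key_s8 {N : ℕ} (F : (Fin N → ZMod 2) → ℤ) (y : Fin N → ZMod 2) :
    ∑ l : Fin N → ZMod 2, (-1:ℤ)^((ip l y).val) *
      ∑ x : Fin N → ZMod 2, (-1:ℤ)^((ip l x).val) * F x = 2^N * F y := by
  simp_rw [Finset.mul_sum]
  rw [Finset.sum_comm]
  have h : ∀ x : Fin N → ZMod 2,
      ∑ l : Fin N → ZMod 2, (-1:ℤ)^((ip l y).val) * ((-1:ℤ)^((ip l x).val) * F x)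
        = (if x = y then (2:ℤ)^N else 0) * F x := by
    intro x
    have : ∀ l : Fin N → ZMod 2,
        (-1:ℤ)^((ip l y).val) * ((-1:ℤ)^((ip l x).val) * F x)
          = (-1:ℤ)^((ip l (x + y)).val) * F x := by
      intro l; rw [ip_add_right_s8, np_add]; ring
    simp_rw [this]
    rw [← Finset.sum_mul, orth]
    simp only [pi_add_eq_zero]
  simp_rw [h, ite_mul, zero_mul]
  simp [Finset.sum_ite_eq']

lemma wht_eq {N : ℕ} (g : (Fin N → ZMod 2) → ZMod 2) (l : Fin N → ZMod 2) :
    wht g l = ∑ x : Fin N → ZMod 2, (-1:ℤ)^((ip l x).val) * (-1:ℤ)^((g x).val) := by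
  unfold wht
  congr 1; funext x; rw [np_add]; ring

def whtP {m k : ℕ} (f : (Fin m → ZMod 2) × (Fin k → ZMod 2) → ZMod 2)
    (l : (Fin m → ZMod 2) × (Fin k → ZMod 2)) : ℤ :=
  ∑ x : (Fin m → ZMod 2) × (Fin k → ZMod 2),
    (-1 : ℤ) ^ (f x + ip l.1 x.1 + ip l.2 x.2).val

lemma wht_inv {N : ℕ} (g : (Fin N → ZMod 2) → ZMod 2) (y : Fin N → ZMod 2) :
    ∑ l : Fin N → ZMod 2, (-1:ℤ)^((ip l y).val) * wht g l
      = 2^N * (-1:ℤ)^((g y).val) := by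
  simp_rw [wht_eq]
  exact key_s8 (fun x => (-1:ℤ)^((g x).val)) y

lemma whtP_eq {m k : ℕ} (f : (Fin m → ZMod 2) × (Fin k → ZMod 2) → ZMod 2)
    (l : Fin m → ZMod 2) (β : Fin k → ZMod 2) :
    whtP f (l, β) = ∑ α : Fin m → ZMod 2,
      (-1:ℤ)^((ip l α).val) * wht (fun y => f (α, y)) β := by
  unfold whtP wht
  rw [Fintype.sum_prod_type]
  congr 1; funext α
  rw [Finset.mul_sum]
  congr 1; funext y
  simp only [np_add]; ring

lemma partial_inv {m k : ℕ} (f : (Fin m → ZMod 2) × (Fin k → ZMod 2) → ZMod 2)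
    (α : Fin m → ZMod 2) (β : Fin k → ZMod 2) :
    ∑ l : Fin m → ZMod 2, (-1:ℤ)^((ip l α).val) * whtP f (l, β)
      = 2^m * wht (fun y => f (α, y)) β := by
  simp_rw [whtP_eq]
  exact key_s8 (fun a => wht (fun y => f (a, y)) β) α

def IsBentP (n m k : ℕ) (f : (Fin m → ZMod 2) × (Fin k → ZMod 2) → ZMod 2) : Prop :=
  ∀ l, |whtP f l| = 2 ^ n

def IsRect (n m k : ℕ)
    (A : (Fin m → ZMod 2) → (Fin k → ZMod 2) → ℤ) : Prop :=
  (∀ α, ∃ g : (Fin k → ZMod 2) → ZMod 2, ∀ β, A α β = wht g β) ∧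
  (∀ β, ∃ g : (Fin m → ZMod 2) → ZMod 2, ∀ α, 2 ^ m * A α β = 2 ^ n * wht g α)

lemma main_iff (n m k : ℕ) (f : (Fin m → ZMod 2) × (Fin k → ZMod 2) → ZMod 2) :
    IsBentP n m k f ↔ IsRect n m k (fun α β => wht (fun y => f (α, y)) β) := by
  constructor
  · intro hb
    refine ⟨fun α => ⟨fun y => f (α, y), fun β => rfl⟩, fun β => ?_⟩
    set g : (Fin m → ZMod 2) → ZMod 2 :=
      fun l => if whtP f (l, β) = 2^n then 0 else 1 with hg
    have hgval : ∀ l, whtP f (l, β) = 2^n * (-1:ℤ)^((g l).val) := by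
      intro l
      rcases (abs_eq (by positivity : (0:ℤ) ≤ 2^n)).1 (hb (l, β)) with h | h
      · have hgl : g l = 0 := if_pos h
        rw [h, hgl]
        norm_num [show ((0:ZMod 2)).val = 0 from rfl]
      · have hne : whtP f (l, β) ≠ 2^n := by
          rw [h]; intro hc
          have : (2:ℤ)^n > 0 := by positivity
          omega
        have hgl : g l = 1 := if_neg hne
        rw [h, hgl]
        norm_num [show ((1:ZMod 2)).val = 1 from rfl]
    refine ⟨g, fun α => ?_⟩
    have h1 := partial_inv f α β
    simp_rw [hgval] at h1
    rw [← h1, wht_eq g α, Finset.mul_sum]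
    congr 1; funext x
    rw [ip_comm α x]; ring
  · rintro ⟨-, hcol⟩
    rintro ⟨l, β⟩
    obtain ⟨g, hgeq⟩ := hcol β
    simp only at hgeq
    have h1 : (2:ℤ)^m * whtP f (l, β) = 2^m * (2^n * (-1:ℤ)^((g l).val)) := by
      rw [whtP_eq, Finset.mul_sum]
      have h2 : ∀ α : Fin m → ZMod 2,
          (2:ℤ)^m * ((-1:ℤ)^((ip l α).val) * wht (fun y => f (α, y)) β)
            = 2^n * ((-1:ℤ)^((ip α l).val) * wht g α) := by
        intro α
        have := hgeq α
        rw [ip_comm l α]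
        calc (2:ℤ)^m * ((-1:ℤ)^((ip α l).val) * wht (fun y => f (α, y)) β)
            = (-1:ℤ)^((ip α l).val) * (2^m * wht (fun y => f (α, y)) β) := by ring
          _ = (-1:ℤ)^((ip α l).val) * (2^n * wht g α) := by rw [this]
          _ = 2^n * ((-1:ℤ)^((ip α l).val) * wht g α) := by ring
      simp_rw [h2]
      rw [← Finset.mul_sum, wht_inv]
      ring
    have h3 := mul_left_cancel₀ (by positivity : (2:ℤ)^m ≠ 0) h1
    rw [h3, abs_mul, abs_pow, abs_pow]
    norm_num

theorem bent_rectangle (n m k : ℕ) (hm : 1 ≤ m) (hk : 1 ≤ k) (hmk : m + k = 2 * n) :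
    (∀ f : (Fin m → ZMod 2) × (Fin k → ZMod 2) → ZMod 2,
      IsBentP n m k f ↔ IsRect n m k (fun α β => wht (fun y => f (α, y)) β)) ∧
    Set.BijOn
      (fun (f : (Fin m → ZMod 2) × (Fin k → ZMod 2) → ZMod 2) =>
        fun α β => wht (fun y => f (α, y)) β)
      {f | IsBentP n m k f} {A | IsRect n m k A} := by
  refine ⟨main_iff n m k, ?_, ?_, ?_⟩
  · intro f hf
    exact (main_iff n m k f).1 hf
  · intro f₁ _ f₂ _ heq
    funext p
    obtain ⟨α, y⟩ := p
    have hαβ : ∀ β, wht (fun y => f₁ (α, y)) β = wht (fun y => f₂ (α, y)) β := by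
      intro β; exact congrFun (congrFun heq α) β
    have h1 := wht_inv (fun y => f₁ (α, y)) y
    have h2 := wht_inv (fun y => f₂ (α, y)) y
    simp_rw [hαβ] at h1
    rw [h1] at h2
    exact np_inj _ _ (mul_left_cancel₀ (by positivity : (2:ℤ)^k ≠ 0) h2)
  · intro A hA
    obtain ⟨hrow, hcol⟩ := hA
    choose g hg using hrow
    refine ⟨fun p => g p.1 p.2, ?_, ?_⟩
    · show IsBentP n m k _
      rw [main_iff]
      have : (fun α β => wht (fun y => g α y) β) = A := by
        funext α β; exact (hg α β).symm
      rw [this]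
      exact ⟨fun α => ⟨g α, hg α⟩, hcol⟩
    · funext α β
      exact (hg α β).symm
end

section
/- Let f₁, f₂, f₃, f₄ : V_{2n} → F_2 be bent functions with f₁(x)+f₂(x)+f₃(x)+f₄(x) = 0 for all x. Define f* : F_2 × F_2 × V_{2n} → F_2 by f*(y,z,x) = f₁(x)f₂(x) + f₁(x)f₃(x) + f₂(x)f₃(x) + y(f₁(x)+f₂(x)) + z(f₁(x)+f₃(x)) + yz. Then f* is a bent function of 2n+2 variables. -/
open Finset

lemma key00 : ∀ p q r s : ZMod 2,
    (∑ y : ZMod 2, ∑ z : ZMod 2, (-1:ℤ)^((p*q+p*r+q*r + y*(p+q) + z*(p+r) + y*z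
      + ((0:ZMod 2)*y + (0:ZMod 2)*z + s)).val)) = 2 * (-1:ℤ)^((p+s).val) := by decide
lemma key01 : ∀ p q r s : ZMod 2,
    (∑ y : ZMod 2, ∑ z : ZMod 2, (-1:ℤ)^((p*q+p*r+q*r + y*(p+q) + z*(p+r) + y*z
      + ((0:ZMod 2)*y + (1:ZMod 2)*z + s)).val)) = 2 * (-1:ℤ)^((q+s).val) := by decide
lemma key10 : ∀ p q r s : ZMod 2,
    (∑ y : ZMod 2, ∑ z : ZMod 2, (-1:ℤ)^((p*q+p*r+q*r + y*(p+q) + z*(p+r) + y*z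
      + ((1:ZMod 2)*y + (0:ZMod 2)*z + s)).val)) = 2 * (-1:ℤ)^((r+s).val) := by decide
lemma key11 : ∀ p q r s : ZMod 2,
    (∑ y : ZMod 2, ∑ z : ZMod 2, (-1:ℤ)^((p*q+p*r+q*r + y*(p+q) + z*(p+r) + y*z
      + ((1:ZMod 2)*y + (1:ZMod 2)*z + s)).val)) = -2 * (-1:ℤ)^((p+q+r+s).val) := by decide
lemma z2cases : ∀ a : ZMod 2, a = 0 ∨ a = 1 := by decide
lemma z2sum4 : ∀ a b c d : ZMod 2, a+b+c+d = 0 → a+b+c = d := by decide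

theorem rothaus_construction (n : ℕ)
    (f₁ f₂ f₃ f₄ : (Fin (2 * n) → ZMod 2) → ZMod 2)
    (h₁ : ∀ l, |wht f₁ l| = 2 ^ n) (h₂ : ∀ l, |wht f₂ l| = 2 ^ n)
    (h₃ : ∀ l, |wht f₃ l| = 2 ^ n) (h₄ : ∀ l, |wht f₄ l| = 2 ^ n)
    (hsum : ∀ x, f₁ x + f₂ x + f₃ x + f₄ x = 0) :
    ∀ l : Fin (2 * n + 2) → ZMod 2,
      |wht (fun x : Fin (2 * n + 2) → ZMod 2 =>
        let y := x 0
        let z := x 1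
        let u := fun i : Fin (2 * n) => x (i.addNat 2)
        f₁ u * f₂ u + f₁ u * f₃ u + f₂ u * f₃ u +
          y * (f₁ u + f₂ u) + z * (f₁ u + f₃ u) + y * z) l| = 2 ^ (n + 1) := by
  intro l
  have h1 : (1 : Fin (2*n+2)) = (0 : Fin (2*n+1)).succ := by ext; simp [Fin.val_one]
  have h2 : ∀ i : Fin (2*n), (i.addNat 2 : Fin (2*n+2)) = i.succ.succ := by
    intro i; ext; simp
  have hip : ∀ (y z : ZMod 2) (u : Fin (2*n) → ZMod 2),
      ip l (Fin.cons y (Fin.cons z u)) = l 0 * y + l 1 * z + ip (fun i => l (i.addNat 2)) u := by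
    intro y z u
    unfold ip
    rw [Fin.sum_univ_succ, Fin.sum_univ_succ]
    simp only [Fin.cons_succ, Fin.cons_zero, h1, h2, add_assoc]
  set e : (ZMod 2 × ZMod 2 × (Fin (2*n) → ZMod 2)) ≃ (Fin (2*n+2) → ZMod 2) :=
    ((Equiv.refl (ZMod 2)).prodCongr (Fin.consEquiv (fun _ : Fin (2*n+1) => ZMod 2))).trans
      (Fin.consEquiv (fun _ : Fin (2*n+2) => ZMod 2)) with he
  have hee : ∀ (y z : ZMod 2) (u : Fin (2*n) → ZMod 2),
      e (y, z, u) = Fin.cons y (Fin.cons z u) := fun _ _ _ => rfl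
  have hre : wht (fun x : Fin (2 * n + 2) → ZMod 2 =>
        let y := x 0
        let z := x 1
        let u := fun i : Fin (2 * n) => x (i.addNat 2)
        f₁ u * f₂ u + f₁ u * f₃ u + f₂ u * f₃ u +
          y * (f₁ u + f₂ u) + z * (f₁ u + f₃ u) + y * z) l
      = ∑ u : Fin (2*n) → ZMod 2, ∑ y : ZMod 2, ∑ z : ZMod 2,
        (-1:ℤ) ^ ((f₁ u * f₂ u + f₁ u * f₃ u + f₂ u * f₃ u +
          y * (f₁ u + f₂ u) + z * (f₁ u + f₃ u) + y * z
          + (l 0 * y + l 1 * z + ip (fun i => l (i.addNat 2)) u)).val) := by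
    unfold wht
    rw [← Equiv.sum_comp e]
    rw [Fintype.sum_prod_type]
    rw [Finset.sum_comm]
    rw [Fintype.sum_prod_type]
    rw [Finset.sum_comm]
    refine Finset.sum_congr rfl fun u _ => ?_
    rw [Finset.sum_comm]
    refine Finset.sum_congr rfl fun y _ => Finset.sum_congr rfl fun z _ => ?_
    rw [hee]
    congr 1
    simp only [Fin.cons_zero, Fin.cons_succ, h1, h2, hip]
  rw [hre]
  set l' : Fin (2*n) → ZMod 2 := fun i => l (i.addNat 2) with hl'
  obtain ha | ha := z2cases (l 0) <;> obtain hb | hb := z2cases (l 1) <;>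
    simp only [ha, hb]
  · rw [Finset.sum_congr rfl fun u _ => key00 (f₁ u) (f₂ u) (f₃ u) (ip l' u),
      ← Finset.mul_sum]
    have : (∑ u : Fin (2*n) → ZMod 2, (-1:ℤ)^((f₁ u + ip l' u).val)) = wht f₁ l' := rfl
    rw [this, abs_mul, h₁ l']
    simp [pow_succ, mul_comm]
  · rw [Finset.sum_congr rfl fun u _ => key01 (f₁ u) (f₂ u) (f₃ u) (ip l' u),
      ← Finset.mul_sum]
    have : (∑ u : Fin (2*n) → ZMod 2, (-1:ℤ)^((f₂ u + ip l' u).val)) = wht f₂ l' := rfl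
    rw [this, abs_mul, h₂ l']
    simp [pow_succ, mul_comm]
  · rw [Finset.sum_congr rfl fun u _ => key10 (f₁ u) (f₂ u) (f₃ u) (ip l' u),
      ← Finset.mul_sum]
    have : (∑ u : Fin (2*n) → ZMod 2, (-1:ℤ)^((f₃ u + ip l' u).val)) = wht f₃ l' := rfl
    rw [this, abs_mul, h₃ l']
    simp [pow_succ, mul_comm]
  · rw [Finset.sum_congr rfl fun u _ => key11 (f₁ u) (f₂ u) (f₃ u) (ip l' u),
      ← Finset.mul_sum]
    have h4 : ∀ u, f₁ u + f₂ u + f₃ u = f₄ u := fun u => z2sum4 _ _ _ _ (hsum u)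
    have : (∑ u : Fin (2*n) → ZMod 2, (-1:ℤ)^((f₁ u + f₂ u + f₃ u + ip l' u).val)) = wht f₄ l' := by
      refine Finset.sum_congr rfl fun u _ => ?_
      rw [h4 u]
    rw [this, abs_mul, h₄ l']
    simp [pow_succ, mul_comm]
end

section
/- The number of d×d 0-1 matrices (d ≥ 2) with exactly two ones in every row and every column that contain no proper nonempty submatrix with the same property equals (d!)²/(2d). -/
open Finset

def omegaSet {ι κ : Type*} [Fintype ι] [Fintype κ] [DecidableEq ℤ]
    (A : Matrix ι κ ℤ) : Set (Matrix ι κ ℤ) :=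
  {C | (∀ i j, (A i j = 0 → C i j = 0) ∧ (A i j = 1 → C i j = 1 ∨ C i j = -1)) ∧
       (∀ i, ∏ j, (if C i j = 0 then 1 else C i j) = -1) ∧
       (∀ j, ∏ i, (if C i j = 0 then 1 else C i j) = -1)}

def TwoPerLine {d : ℕ} (B : Matrix (Fin d) (Fin d) ℤ) : Prop :=
  (∀ i j, B i j = 0 ∨ B i j = 1) ∧
  (∀ i, ∑ j, B i j = 2) ∧ (∀ j, ∑ i, B i j = 2)

def MinimalTwoPerLine {d : ℕ} (B : Matrix (Fin d) (Fin d) ℤ) : Prop :=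
  TwoPerLine B ∧
  ∀ s t : Finset (Fin d), s.Nonempty →
    (∀ i ∈ s, ∑ j ∈ t, B i j = 2) → (∀ j ∈ t, ∑ i ∈ s, B i j = 2) →
    s = Finset.univ ∧ t = Finset.univ

/-!
Hall's theorem, applied twice, writes a matrix with two ones per line as `P σ + P τ` for
permutation matrices with `σ i ≠ τ i`. Rows `s` and columns `t` carry a sub-configuration
exactly when `t` is invariant under `τ σ⁻¹` and `s = σ⁻¹ t`, so minimality says that `τ σ⁻¹`
is a single `d`-cycle. Conversely such a pair determines its matrix up to swapping `σ` and `τ`: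
the columns where the `σ`-ones of two representations agree form a `τ σ⁻¹`-invariant set.
Hence there are `d! (d - 1)! / 2 = (d!)² / (2d)` minimal matrices.
-/

open Equiv Equiv.Perm Nat

section CyclicPermutation

variable {α : Type*} {π σ τ : Perm α}

theorem eq_univ_of_isCycleOn_univ [Fintype α] (hπ : π.IsCycleOn Set.univ) {t : Finset α}
    (ht : t.Nonempty) (hmaps : ∀ x ∈ t, π x ∈ t) : t = univ := by
  obtain ⟨a, ha⟩ := ht
  refine eq_univ_of_forall fun b => ?_
  obtain ⟨n, rfl⟩ :=
    hπ.exists_pow_eq' Set.finite_univ (Set.mem_univ a) (Set.mem_univ b)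
  rw [coe_pow]
  exact Set.MapsTo.iterate (s := (t : Set α)) hmaps n ha

theorem isCycleOn_univ_of_forall_invariant [Fintype α] [DecidableEq α]
    (h : ∀ t : Finset α, t.Nonempty → (∀ x, π x ∈ t ↔ x ∈ t) → t = univ) :
    π.IsCycleOn Set.univ := by
  refine ⟨π.bijOn fun _ => by simp, fun x _ y _ => ?_⟩
  have horbit := h {z | π.SameCycle x z} ⟨x, by simp [SameCycle.refl]⟩
    fun z => by simp [sameCycle_apply_right]
  have hy : y ∈ ({z | π.SameCycle x z} : Finset α) := by
    rw [horbit]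
    exact mem_univ y
  simpa using hy

theorem isCycleOn_univ_iff_cycleType [Fintype α] [DecidableEq α] [Nontrivial α] :
    π.IsCycleOn Set.univ ↔ π.cycleType = {Fintype.card α} := by
  constructor
  · intro hπ
    have hcycle : π.IsCycle := isCycle_iff_exists_isCycleOn.2
      ⟨Set.univ, Set.nontrivial_univ, hπ, fun x _ => Set.mem_univ x⟩
    have hsupp : π.support = univ := eq_univ_of_forall fun x =>
      mem_support.2 (hπ.apply_ne Set.nontrivial_univ (Set.mem_univ x))
    rw [hcycle.cycleType, hsupp, Finset.card_univ]
  · intro h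
    have hcycle : π.IsCycle := card_cycleType_eq_one.1 (by simp [h])
    have hsupp : π.support = univ := eq_univ_of_card _ (by rw [← sum_cycleType, h]; simp)
    convert hcycle.isCycleOn
    ext x
    simp [← mem_support, hsupp]

open scoped Classical in
theorem card_isCycleOn_univ [Fintype α] [DecidableEq α] [Nontrivial α] :
    #{π : Perm α | π.IsCycleOn Set.univ} = (Fintype.card α - 1)! := by
  simp_rw [isCycleOn_univ_iff_cycleType]
  rw [card_of_cycleType_singleton Fintype.one_lt_card le_rfl, choose_self, mul_one]

theorem apply_ne_of_isCycleOn_univ [Nontrivial α] (h : (τ * σ⁻¹).IsCycleOn Set.univ) (i : α) :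
    σ i ≠ τ i := by
  simpa [eq_comm] using h.apply_ne Set.nontrivial_univ (Set.mem_univ (σ i))

end CyclicPermutation

section PermutationMatrix

variable {n R : Type*} [DecidableEq n]

theorem permMatrix_apply_eq_ite [Zero R] [One R] (σ : Perm n) (i j : n) :
    σ.permMatrix R i j = if σ i = j then 1 else 0 := by
  simp [PEquiv.toMatrix_apply]

theorem sum_permMatrix_row [AddCommMonoidWithOne R] (σ : Perm n) (i : n) (t : Finset n) :
    ∑ j ∈ t, σ.permMatrix R i j = if σ i ∈ t then 1 else 0 := by
  simp

theorem sum_permMatrix_col [AddCommMonoidWithOne R] (σ : Perm n) (j : n) (s : Finset n) :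
    ∑ i ∈ s, σ.permMatrix R i j = if σ⁻¹ j ∈ s then 1 else 0 := by
  simp [← Perm.eq_inv_iff_eq]

variable [Fintype n]

theorem exists_perm_apply_ne_zero [CommSemiring R] [LinearOrder R]
    [IsStrictOrderedRing R] {B : Matrix n n R} {c : R} (hc : 0 < c) (hB : ∀ i j, 0 ≤ B i j)
    (hrow : ∀ i, ∑ j, B i j = c) (hcol : ∀ j, ∑ i, B i j = c) :
    ∃ σ : Perm n, ∀ i, B i (σ i) ≠ 0 := by
  let N (i : n) : Finset n := {j | B i j ≠ 0}
  have hall (s : Finset n) : #s ≤ #(s.biUnion N) := by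
    set U := s.biUnion N
    have hrowU : ∀ i ∈ s, ∑ j ∈ U, B i j = c := fun i hi => by
      rw [← hrow i]
      refine sum_subset (subset_univ U) fun j _ hj => ?_
      by_contra hne
      exact hj (mem_biUnion.2 ⟨i, hi, by simpa [N] using hne⟩)
    suffices (#s : R) * c ≤ #U * c by exact_mod_cast le_of_mul_le_mul_right this hc
    calc (#s : R) * c = ∑ i ∈ s, ∑ j ∈ U, B i j := by simp [sum_congr rfl hrowU]
      _ ≤ ∑ i, ∑ j ∈ U, B i j :=
        sum_le_sum_of_subset_of_nonneg (subset_univ s) fun i _ _ => sum_nonneg fun j _ => hB i j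
      _ = #U * c := by rw [sum_comm (f := fun i j => B i j)]; simp [hcol]
  obtain ⟨f, hf, hfN⟩ := (all_card_le_biUnion_card_iff_exists_injective N).1 hall
  exact ⟨Equiv.ofBijective f (Finite.injective_iff_bijective.1 hf),
    fun i => by simpa [N] using hfN i⟩

theorem eq_permMatrix_of_sum_eq_one {C : Matrix n n ℤ} {τ : Perm n} (hC : ∀ i j, 0 ≤ C i j)
    (hrow : ∀ i, ∑ j, C i j = 1) (hτ : ∀ i, C i (τ i) ≠ 0) : C = τ.permMatrix ℤ := by
  ext i j
  have hsplit := add_sum_erase univ (C i) (mem_univ (τ i))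
  have hrest : 0 ≤ ∑ k ∈ univ.erase (τ i), C i k := sum_nonneg fun k _ => hC i k
  have hτi : 0 < C i (τ i) := (hC i (τ i)).lt_of_ne (hτ i).symm
  rw [hrow i] at hsplit
  rw [permMatrix_apply_eq_ite]
  split_ifs with h
  · subst h
    omega
  · have hzero :=
      (sum_eq_zero_iff_of_nonneg (s := univ.erase (τ i)) fun k _ => hC i k).1 (by omega)
    exact hzero j (mem_erase.2 ⟨Ne.symm h, mem_univ j⟩)

end PermutationMatrix

section PermutationMatrixPair

variable {n : Type*} [DecidableEq n] {σ τ σ' τ' : Perm n}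

theorem sum_permMatrix_add_row_eq_two_iff (i : n) (t : Finset n) :
    ∑ j ∈ t, (σ.permMatrix ℤ + τ.permMatrix ℤ) i j = 2 ↔ σ i ∈ t ∧ τ i ∈ t := by
  simp only [Matrix.add_apply, sum_add_distrib, sum_permMatrix_row]
  split_ifs <;> simp_all

theorem sum_permMatrix_add_col_eq_two_iff (j : n) (s : Finset n) :
    ∑ i ∈ s, (σ.permMatrix ℤ + τ.permMatrix ℤ) i j = 2 ↔ σ⁻¹ j ∈ s ∧ τ⁻¹ j ∈ s := by
  simp only [Matrix.add_apply, sum_add_distrib, sum_permMatrix_col]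
  split_ifs <;> simp_all

theorem apply_eq_or_of_permMatrix_add_eq
    (h : σ.permMatrix ℤ + τ.permMatrix ℤ = σ'.permMatrix ℤ + τ'.permMatrix ℤ) {i : n}
    (hne : σ i ≠ τ i) : (σ' i = σ i ∧ τ' i = τ i) ∨ (σ' i = τ i ∧ τ' i = σ i) := by
  have hσ := congrFun (congrFun h i) (σ i)
  have hτ := congrFun (congrFun h i) (τ i)
  simp only [Matrix.add_apply, permMatrix_apply_eq_ite] at hσ hτ
  grind

theorem permMatrix_add_eq_permMatrix_add_iff [Fintype n] (hπ : (τ * σ⁻¹).IsCycleOn Set.univ)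
    (hne : ∀ i, σ i ≠ τ i) :
    σ.permMatrix ℤ + τ.permMatrix ℤ = σ'.permMatrix ℤ + τ'.permMatrix ℤ ↔
      (σ' = σ ∧ τ' = τ) ∨ (σ' = τ ∧ τ' = σ) := by
  refine ⟨fun h => ?_, by rintro (⟨rfl, rfl⟩ | ⟨rfl, rfl⟩) <;> simp [add_comm]⟩
  have hrow i := apply_eq_or_of_permMatrix_add_eq h (hne i)
  have hstep : ∀ i, σ' i = σ i → σ' (σ⁻¹ (τ i)) = τ i := by
    intro i hi
    have hτi : τ' i = τ i :=
      ((hrow i).resolve_right fun h => hne i (hi.symm.trans h.1)).2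
    set k := σ⁻¹ (τ i)
    have hσk : σ k = τ i := by simp [k]
    rcases hrow k with h | h
    · rw [h.1, hσk]
    · have hki : k = i := τ'.injective (by rw [h.2, hσk, hτi])
      exact absurd (hki ▸ hσk) (hne i)
  set t : Finset n := {j | σ' (σ⁻¹ j) = j}
  rcases t.eq_empty_or_nonempty with ht | ht
  · have hswap i : σ' i = τ i ∧ τ' i = σ i :=
      (hrow i).resolve_left fun hi => by
        have hmem : σ i ∈ t := by simp [t, hi.1]
        simp [ht] at hmem
    exact Or.inr ⟨Perm.ext fun i => (hswap i).1, Perm.ext fun i => (hswap i).2⟩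
  · have htu : t = univ := eq_univ_of_isCycleOn_univ hπ ht fun j hj => by
      simpa [t] using hstep (σ⁻¹ j) (by simpa [t] using hj)
    have hkeep i : σ' i = σ i ∧ τ' i = τ i := (hrow i).resolve_right fun hi => hne i <| by
      have : σ i ∈ t := htu ▸ mem_univ _
      simp [t] at this
      rw [← this, hi.1]
    exact Or.inl ⟨Perm.ext fun i => (hkeep i).1, Perm.ext fun i => (hkeep i).2⟩

end PermutationMatrixPair

section TwoPerLine

variable {d : ℕ} {σ τ : Perm (Fin d)}

theorem twoPerLine_permMatrix_add (hne : ∀ i, σ i ≠ τ i) :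
    TwoPerLine (σ.permMatrix ℤ + τ.permMatrix ℤ) := by
  refine ⟨fun i j => ?_, fun i => ?_, fun j => ?_⟩
  · have := hne i
    simp only [Matrix.add_apply, permMatrix_apply_eq_ite]
    split_ifs <;> simp_all
  · exact (sum_permMatrix_add_row_eq_two_iff i univ).2 ⟨mem_univ _, mem_univ _⟩
  · exact (sum_permMatrix_add_col_eq_two_iff j univ).2 ⟨mem_univ _, mem_univ _⟩

theorem TwoPerLine.exists_eq_permMatrix_add {B : Matrix (Fin d) (Fin d) ℤ} (hB : TwoPerLine B) :
    ∃ σ τ : Perm (Fin d), B = σ.permMatrix ℤ + τ.permMatrix ℤ := by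
  obtain ⟨h01, hrow, hcol⟩ := hB
  have hB : ∀ i j, 0 ≤ B i j := fun i j => by rcases h01 i j with h | h <;> simp [h]
  obtain ⟨σ, hσ⟩ := exists_perm_apply_ne_zero two_pos hB hrow hcol
  set C := B - σ.permMatrix ℤ
  have hC : ∀ i j, 0 ≤ C i j := fun i j => by
    have := hσ i
    rcases h01 i j with h | h <;> simp [C] <;> grind
  have hCrow : ∀ i, ∑ j, C i j = 1 := fun i => by
    simp only [C, Matrix.sub_apply, sum_sub_distrib, hrow, sum_permMatrix_row]
    simp
  have hCcol : ∀ j, ∑ i, C i j = 1 := fun j => by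
    simp only [C, Matrix.sub_apply, sum_sub_distrib, hcol, sum_permMatrix_col]
    simp
  obtain ⟨τ, hτ⟩ := exists_perm_apply_ne_zero one_pos hC hCrow hCcol
  exact ⟨σ, τ, by rw [← eq_permMatrix_of_sum_eq_one hC hCrow hτ, add_sub_cancel]⟩

theorem minimalTwoPerLine_permMatrix_add_iff [Nontrivial (Fin d)] :
    MinimalTwoPerLine (σ.permMatrix ℤ + τ.permMatrix ℤ) ↔ (τ * σ⁻¹).IsCycleOn Set.univ := by
  simp only [MinimalTwoPerLine, sum_permMatrix_add_row_eq_two_iff,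
    sum_permMatrix_add_col_eq_two_iff]
  constructor
  · rintro ⟨-, hmin⟩
    refine isCycleOn_univ_of_forall_invariant fun t ht hinv =>
      (hmin {i | σ i ∈ t} t ?_ ?_ ?_).2
    · obtain ⟨j, hj⟩ := ht
      exact ⟨σ⁻¹ j, by simpa using hj⟩
    · intro i hi
      rw [mem_filter_univ] at hi
      exact ⟨hi, by simpa using (hinv (σ i)).2 hi⟩
    · intro j hj
      simp only [mem_filter_univ, coe_inv, apply_symm_apply]
      exact ⟨hj, (hinv _).1 (by simpa using hj)⟩
  · intro hπ
    refine ⟨twoPerLine_permMatrix_add (apply_ne_of_isCycleOn_univ hπ), fun s t hs hrow hcol => ?_⟩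
    obtain ⟨i₀, hi₀⟩ := hs
    have ht : t = univ := eq_univ_of_isCycleOn_univ hπ ⟨σ i₀, (hrow i₀ hi₀).1⟩
      fun j hj => by simpa using (hrow _ (hcol j hj).1).2
    exact ⟨eq_univ_of_forall fun i => by simpa using (hcol (σ i) (ht ▸ mem_univ _)).1, ht⟩

theorem minimalTwoPerLine_iff_exists [Nontrivial (Fin d)] {B : Matrix (Fin d) (Fin d) ℤ} :
    MinimalTwoPerLine B ↔ ∃ σ τ : Perm (Fin d),
      (τ * σ⁻¹).IsCycleOn Set.univ ∧ σ.permMatrix ℤ + τ.permMatrix ℤ = B := by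
  constructor
  · intro hB
    obtain ⟨σ, τ, rfl⟩ := hB.1.exists_eq_permMatrix_add
    exact ⟨σ, τ, minimalTwoPerLine_permMatrix_add_iff.1 hB, rfl⟩
  · rintro ⟨σ, τ, hπ, rfl⟩
    exact minimalTwoPerLine_permMatrix_add_iff.2 hπ

end TwoPerLine

section Counting

variable (α : Type*) [Fintype α] [DecidableEq α]

open scoped Classical in
noncomputable def cyclicPairs : Finset (Perm α × Perm α) :=
  {p | (p.2 * p.1⁻¹).IsCycleOn Set.univ}

variable {α}

theorem mem_cyclicPairs {p : Perm α × Perm α} :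
    p ∈ cyclicPairs α ↔ (p.2 * p.1⁻¹).IsCycleOn Set.univ := by
  simp [cyclicPairs]

theorem swap_mem_cyclicPairs {p : Perm α × Perm α} (hp : p ∈ cyclicPairs α) :
    p.swap ∈ cyclicPairs α := by
  rw [mem_cyclicPairs] at hp ⊢
  simpa [mul_inv_rev] using isCycleOn_inv.2 hp

theorem card_cyclicPairs [Nontrivial α] :
    #(cyclicPairs α) = (Fintype.card α)! * (Fintype.card α - 1)! := by
  classical
  rw [← card_isCycleOn_univ, ← Fintype.card_perm, ← Finset.card_univ, ← card_product]
  refine card_nbij' (fun p => (p.1, p.2 * p.1⁻¹)) (fun q => (q.1, q.2 * q.1)) ?_ ?_ ?_ ?_ <;>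
    intro p _ <;> simp_all [mem_cyclicPairs]

theorem two_mul_card_image_permMatrix_add [Nontrivial α] :
    2 * #((cyclicPairs α).image fun p => p.1.permMatrix ℤ + p.2.permMatrix ℤ) =
      #(cyclicPairs α) := by
  set Φ : Perm α × Perm α → Matrix α α ℤ := fun p => p.1.permMatrix ℤ + p.2.permMatrix ℤ
  have hfiber : ∀ B ∈ (cyclicPairs α).image Φ, #{p ∈ cyclicPairs α | Φ p = B} = 2 := by
    intro B hB
    obtain ⟨⟨σ, τ⟩, hp, rfl⟩ := mem_image.1 hB
    have hπ := mem_cyclicPairs.1 hp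
    have hne := apply_ne_of_isCycleOn_univ hπ
    have hpair : {q ∈ cyclicPairs α | Φ q = Φ (σ, τ)} = {(σ, τ), (τ, σ)} := by
      ext ⟨σ', τ'⟩
      rw [mem_filter, eq_comm, permMatrix_add_eq_permMatrix_add_iff hπ hne]
      simp only [mem_insert, mem_singleton, Prod.mk.injEq]
      constructor
      · exact And.right
      · rintro (⟨rfl, rfl⟩ | ⟨rfl, rfl⟩)
        · exact ⟨hp, Or.inl ⟨rfl, rfl⟩⟩
        · exact ⟨swap_mem_cyclicPairs hp, Or.inr ⟨rfl, rfl⟩⟩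
    have hστ : σ ≠ τ := fun h => hne (Classical.arbitrary α) (by rw [h])
    rw [hpair, card_pair (by simp [hστ])]
  calc 2 * #((cyclicPairs α).image Φ) = ∑ B ∈ (cyclicPairs α).image Φ, 2 := by
        rw [sum_const, smul_eq_mul, mul_comm]
    _ = ∑ B ∈ (cyclicPairs α).image Φ, #{p ∈ cyclicPairs α | Φ p = B} :=
        (sum_congr rfl hfiber).symm
    _ = #(cyclicPairs α) := (card_eq_sum_card_image Φ _).symm

end Counting

theorem minimal_two_count (d : ℕ) (hd : 2 ≤ d) :
    ({B : Matrix (Fin d) (Fin d) ℤ | MinimalTwoPerLine B}.ncard : ℚ)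
      = (Nat.factorial d : ℚ) ^ 2 / (2 * d) := by
  have : Nontrivial (Fin d) := Fin.nontrivial_iff_two_le.2 hd
  set minimal := (cyclicPairs (Fin d)).image fun p => p.1.permMatrix ℤ + p.2.permMatrix ℤ
  have hset : {B : Matrix (Fin d) (Fin d) ℤ | MinimalTwoPerLine B} = minimal := by
    ext B
    simp [minimal, minimalTwoPerLine_iff_exists, mem_cyclicPairs]
  have hcount : (2 * #minimal : ℚ) = d ! * (d - 1)! := by
    have := two_mul_card_image_permMatrix_add (α := Fin d)
    rw [card_cyclicPairs, Fintype.card_fin] at this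
    exact_mod_cast this
  have hfact : (d ! : ℚ) = d * (d - 1)! := by
    exact_mod_cast (mul_factorial_pred (by omega)).symm
  rw [hset, Set.ncard_coe_finset, eq_div_iff (by positivity), sq, hfact]
  rw [hfact] at hcount
  linear_combination (d : ℚ) * hcount
end
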